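/- Let k be a nonnegative integer and ℓ an odd positive integer with p := k + ℓ − 1 ≥ 1. If (U, V) solves the self-similar system (S) on (−1,1) and both U and V are bounded on (−1,1), then U and V are identically zero on (−1,1). -/

import Mathlib

/-!
Put `ψ = Im (U V̄)`, `W = (y + 1)|U|² + (1 - y)|V|²` and `c = 1/(2p)`. The system gives
`(1 - y²) ψ' = 2cy ψ - (G R + F W)`, and for odd `ℓ` both `F = ℓ (|U|² + |V|²)^k R^(ℓ-1)` and
`G R = k (|U|² + |V|²)^(k-1) R^(ℓ+1)` are nonnegative. Hence `(1 - y²)^c ψ` is antitone; it is bounded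
by a multiple of `(1 - y²)^c`, so it tends to `0` at both ends of `(-1, 1)` and vanishes identically.
Then `G R = F W = 0`, which forces `G = 0` (`G` carries a factor `R`) and `F = 0` (where `W = 0`
both `U` and `V` vanish, and `p ≥ 1`).
The system decouples into `(y + 1) U' = -c U` and `(y - 1) V' = -c V`, and the only bounded solutions
are zero because `(y + 1)^(2c) |U|²` and `(1 - y)^(2c) |V|²` are constant.
-/

open Set Complex Filter Topology

/-- `R(y) = U(y) conj(V(y)) + conj(U(y)) V(y)` (a real number, viewed in `ℂ`). -/
noncomputable def Rfun (U V : ℝ → ℂ) (y : ℝ) : ℂ :=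
  U y * (starRingEnd ℂ) (V y) + (starRingEnd ℂ) (U y) * V y

/-- `F(y) = ℓ (|U|² + |V|²)^k R^{ℓ-1}` (equal to `0` when `ℓ = 0`). -/
noncomputable def Ffun (k l : ℕ) (U V : ℝ → ℂ) (y : ℝ) : ℂ :=
  (l : ℂ) * ((‖U y‖ ^ 2 + ‖V y‖ ^ 2 : ℝ) : ℂ) ^ k *
    (Rfun U V y) ^ (l - 1)

/-- `G(y) = k (|U|² + |V|²)^{k-1} R^ℓ` (equal to `0` when `k = 0`). -/
noncomputable def Gfun (k l : ℕ) (U V : ℝ → ℂ) (y : ℝ) : ℂ :=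
  (k : ℂ) * ((‖U y‖ ^ 2 + ‖V y‖ ^ 2 : ℝ) : ℂ) ^ (k - 1) *
    (Rfun U V y) ^ l

/-- `(U, V)` solves the self-similar system (S) on the open set `J`:
`U, V` are continuously differentiable on `J` and for all `y ∈ J`,
`i[(y+1)U' + U/(2p)] = F V + G U` and `i[(y-1)V' + V/(2p)] = F U + G V`,
where `p = k + ℓ - 1`. -/
def SolvesS (k l : ℕ) (U V : ℝ → ℂ) (J : Set ℝ) : Prop :=
  ContDiffOn ℝ 1 U J ∧ ContDiffOn ℝ 1 V J ∧
  ∀ y ∈ J,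
    Complex.I * ((↑y + 1) * deriv U y + (1 / (2 * ((k + l - 1 : ℕ) : ℂ))) * U y)
      = Ffun k l U V y * V y + Gfun k l U V y * U y ∧
    Complex.I * ((↑y - 1) * deriv V y + (1 / (2 * ((k + l - 1 : ℕ) : ℂ))) * V y)
      = Ffun k l U V y * U y + Gfun k l U V y * V y

open ComplexConjugate

theorem one_sub_sq_mul_im_deriv_mul_conj {y c f g : ℝ} {u v u' v' : ℂ}
    (hu : I * ((y + 1) * u' + c * u) = f * v + g * u)
    (hv : I * ((y - 1) * v' + c * v) = f * u + g * v) :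
    (1 - y ^ 2) * (u' * conj v + u * conj v').im =
      2 * c * y * (u * conj v).im
        - (g * (2 * (u * conj v).re) + f * ((y + 1) * ‖u‖ ^ 2 + (1 - y) * ‖v‖ ^ 2)) := by
  have hu_re := congrArg re hu
  have hu_im := congrArg im hu
  have hv_re := congrArg re hv
  have hv_im := congrArg im hv
  simp only [mul_re, mul_im, add_re, add_im, sub_re, sub_im, I_re, I_im, ofReal_re, ofReal_im,
    one_re, one_im] at hu_re hu_im hv_re hv_im
  simp only [mul_re, mul_im, add_im, conj_re, conj_im, ← normSq_eq_norm_sq, normSq_apply]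
  linear_combination (-(1 - y) * v.re) * hu_re + (-(1 - y) * v.im) * hu_im
    + (-(1 + y) * u.re) * hv_re + (-(1 + y) * u.im) * hv_im

theorem AntitoneOn.nonpos_of_le_of_tendsto_nhdsGT {Q B : ℝ → ℝ} {a b y : ℝ}
    (hQ : AntitoneOn Q (Ioo a b)) (hQB : ∀ x ∈ Ioo a b, Q x ≤ B x)
    (hB : Tendsto B (𝓝[>] a) (𝓝 0)) (hy : y ∈ Ioo a b) : Q y ≤ 0 := by
  refine ge_of_tendsto hB ?_
  filter_upwards [Ioo_mem_nhdsGT hy.1] with x hx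
  have hxJ : x ∈ Ioo a b := ⟨hx.1, hx.2.trans hy.2⟩
  exact (hQ hxJ hy hx.2.le).trans (hQB x hxJ)

theorem AntitoneOn.nonneg_of_le_of_tendsto_nhdsLT {Q B : ℝ → ℝ} {a b y : ℝ}
    (hQ : AntitoneOn Q (Ioo a b)) (hBQ : ∀ x ∈ Ioo a b, B x ≤ Q x)
    (hB : Tendsto B (𝓝[<] b) (𝓝 0)) (hy : y ∈ Ioo a b) : 0 ≤ Q y := by
  refine le_of_tendsto hB ?_
  filter_upwards [Ioo_mem_nhdsLT hy.2] with x hx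
  have hxJ : x ∈ Ioo a b := ⟨hy.1.trans hx.1, hx.2⟩
  exact (hBQ x hxJ).trans (hQ hy hxJ hx.1.le)

theorem tendsto_rpow_mul_const_of_tendsto_zero {l : Filter ℝ} {φ : ℝ → ℝ} {c : ℝ} (hc : 0 < c)
    (hφ : Tendsto φ l (𝓝 0)) (M : ℝ) : Tendsto (fun y ↦ φ y ^ c * M) l (𝓝 0) := by
  simpa [Real.zero_rpow hc.ne'] using (hφ.rpow_const (Or.inr hc.le)).mul_const M

theorem antitoneOn_Ioo_of_hasDerivAt_nonpos {Q Q' : ℝ → ℝ} {a b : ℝ}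
    (hQ : ∀ y ∈ Ioo a b, HasDerivAt Q (Q' y) y) (hQ' : ∀ y ∈ Ioo a b, Q' y ≤ 0) :
    AntitoneOn Q (Ioo a b) := by
  refine antitoneOn_of_hasDerivWithinAt_nonpos (f' := Q') (convex_Ioo a b)
    (fun y hy ↦ (hQ y hy).continuousAt.continuousWithinAt) (fun y hy ↦ ?_) (fun y hy ↦ ?_)
  · rw [interior_Ioo] at hy ⊢
    exact (hQ y hy).hasDerivWithinAt
  · rw [interior_Ioo] at hy
    exact hQ' y hy

theorem tendsto_one_sub_sq_nhds_zero {x : ℝ} (hx : x ^ 2 = 1) :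
    Tendsto (fun y : ℝ ↦ 1 - y ^ 2) (𝓝 x) (𝓝 0) := by
  simpa [hx] using (by fun_prop : Continuous fun y : ℝ ↦ 1 - y ^ 2).tendsto x

theorem eq_zero_of_one_sub_sq_mul_hasDerivAt {ψ ψ' D : ℝ → ℝ} {c M : ℝ} (hc : 0 < c)
    (hψ : ∀ y ∈ Ioo (-1 : ℝ) 1, HasDerivAt ψ (ψ' y) y)
    (hψ' : ∀ y ∈ Ioo (-1 : ℝ) 1, (1 - y ^ 2) * ψ' y = 2 * c * y * ψ y - D y)
    (hD : ∀ y ∈ Ioo (-1 : ℝ) 1, 0 ≤ D y) (hM : ∀ y ∈ Ioo (-1 : ℝ) 1, |ψ y| ≤ M) :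
    ∀ y ∈ Ioo (-1 : ℝ) 1, ψ y = 0 := by
  have hpos : ∀ y ∈ Ioo (-1 : ℝ) 1, 0 < 1 - y ^ 2 := fun y hy ↦ by nlinarith [hy.1, hy.2]
  set q : ℝ → ℝ := fun y ↦ (1 - y ^ 2) ^ c * ψ y
  have hq : AntitoneOn q (Ioo (-1) 1) := by
    refine antitoneOn_Ioo_of_hasDerivAt_nonpos (Q' := fun y ↦ -((1 - y ^ 2) ^ (c - 1) * D y))
      (fun y hy ↦ ?_) (fun y hy ↦ ?_)
    · have hw := ((hasDerivAt_pow 2 y).const_sub 1).rpow_const (p := c) (Or.inl (hpos y hy).ne')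
      refine (hw.mul (hψ y hy)).congr_deriv ?_
      have hsplit : (1 - y ^ 2) ^ c = (1 - y ^ 2) ^ (c - 1) * (1 - y ^ 2) := by
        rw [← Real.rpow_add_one (hpos y hy).ne', sub_add_cancel]
      rw [hsplit]
      linear_combination (1 - y ^ 2) ^ (c - 1) * hψ' y hy
    · exact neg_nonpos.2 (mul_nonneg (Real.rpow_nonneg (hpos y hy).le _) (hD y hy))
  have hqM : ∀ y ∈ Ioo (-1 : ℝ) 1, |q y| ≤ (1 - y ^ 2) ^ c * M := fun y hy ↦ by
    rw [abs_mul, abs_of_pos (Real.rpow_pos_of_pos (hpos y hy) c)]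
    exact mul_le_mul_of_nonneg_left (hM y hy) (Real.rpow_nonneg (hpos y hy).le _)
  intro y hy
  have hle : q y ≤ 0 := hq.nonpos_of_le_of_tendsto_nhdsGT (fun x hx ↦ (abs_le.1 (hqM x hx)).2)
    (tendsto_rpow_mul_const_of_tendsto_zero hc
      ((tendsto_one_sub_sq_nhds_zero (by norm_num)).mono_left nhdsWithin_le_nhds) M) hy
  have hge : 0 ≤ q y := hq.nonneg_of_le_of_tendsto_nhdsLT
    (B := fun x ↦ -((1 - x ^ 2) ^ c * M)) (fun x hx ↦ (abs_le.1 (hqM x hx)).1)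
    (by simpa using (tendsto_rpow_mul_const_of_tendsto_zero hc
      ((tendsto_one_sub_sq_nhds_zero (by norm_num)).mono_left nhdsWithin_le_nhds) M).neg) hy
  exact (mul_eq_zero.1 (le_antisymm hle hge)).resolve_left
    (Real.rpow_pos_of_pos (hpos y hy) c).ne'

theorem source_eq_zero_of_one_sub_sq_mul_hasDerivAt {ψ ψ' D : ℝ → ℝ} {c M : ℝ} (hc : 0 < c)
    (hψ : ∀ y ∈ Ioo (-1 : ℝ) 1, HasDerivAt ψ (ψ' y) y)
    (hψ' : ∀ y ∈ Ioo (-1 : ℝ) 1, (1 - y ^ 2) * ψ' y = 2 * c * y * ψ y - D y)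
    (hD : ∀ y ∈ Ioo (-1 : ℝ) 1, 0 ≤ D y) (hM : ∀ y ∈ Ioo (-1 : ℝ) 1, |ψ y| ≤ M) :
    ∀ y ∈ Ioo (-1 : ℝ) 1, D y = 0 := by
  have hψ0 := eq_zero_of_one_sub_sq_mul_hasDerivAt hc hψ hψ' hD hM
  intro y hy
  have hev : ψ =ᶠ[𝓝 y] fun _ ↦ 0 := eventually_of_mem (isOpen_Ioo.mem_nhds hy) hψ0
  have hψ'0 : ψ' y = 0 := (hψ y hy).unique ((hasDerivAt_const y 0).congr_of_eventuallyEq hev)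
  simpa [hψ'0, hψ0 y hy] using hψ' y hy

theorem eq_zero_of_sub_smul_hasDerivAt {F : Type*} [NormedAddCommGroup F] [InnerProductSpace ℝ F]
    {U U' : ℝ → F} {a b c M : ℝ} (hc : 0 < c) (hU : ∀ y ∈ Ioo a b, HasDerivAt U (U' y) y)
    (hUU' : ∀ y ∈ Ioo a b, (y - a) • U' y = -c • U y) (hM : ∀ y ∈ Ioo a b, ‖U y‖ ≤ M) :
    ∀ y ∈ Ioo a b, U y = 0 := by
  have hpos : ∀ y ∈ Ioo a b, 0 < y - a := fun y hy ↦ sub_pos.2 hy.1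
  -- `(y - a)^(2c) ‖U y‖²` is a first integral of the equation.
  set N : ℝ → ℝ := fun y ↦ (y - a) ^ (2 * c) * ‖U y‖ ^ 2
  have hN : AntitoneOn N (Ioo a b) := by
    refine antitoneOn_Ioo_of_hasDerivAt_nonpos (Q' := fun _ ↦ 0) (fun y hy ↦ ?_) (fun _ _ ↦ le_rfl)
    have hw := ((hasDerivAt_id y).sub_const a).rpow_const (p := 2 * c) (Or.inl (hpos y hy).ne')
    refine (hw.mul (hU y hy).norm_sq).congr_deriv ?_
    have hinner : (y - a) * inner ℝ (U y) (U' y) = -c * ‖U y‖ ^ 2 := by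
      rw [← real_inner_smul_right, hUU' y hy, real_inner_smul_right, real_inner_self_eq_norm_sq]
    have hsplit : (y - a) ^ (2 * c) = (y - a) ^ (2 * c - 1) * (y - a) := by
      rw [← Real.rpow_add_one (hpos y hy).ne', sub_add_cancel]
    simp only [id]
    rw [hsplit]
    linear_combination 2 * (y - a) ^ (2 * c - 1) * hinner
  have hlim : Tendsto (fun x ↦ x - a) (𝓝[>] a) (𝓝 0) := by
    simpa using ((continuous_sub_right a).tendsto a).mono_left nhdsWithin_le_nhds
  intro y hy
  have hle : N y ≤ 0 := hN.nonpos_of_le_of_tendsto_nhdsGT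
    (fun x hx ↦ mul_le_mul_of_nonneg_left (pow_le_pow_left₀ (norm_nonneg _) (hM x hx) 2)
      (Real.rpow_nonneg (hpos x hx).le _))
    (tendsto_rpow_mul_const_of_tendsto_zero (by positivity) hlim (M ^ 2)) hy
  have hNy : (y - a) ^ (2 * c) * ‖U y‖ ^ 2 = 0 :=
    le_antisymm hle (mul_nonneg (Real.rpow_nonneg (hpos y hy).le _) (sq_nonneg _))
  simpa [(Real.rpow_pos_of_pos (hpos y hy) _).ne'] using hNy

theorem Rfun_eq_ofReal (U V : ℝ → ℂ) (y : ℝ) :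
    Rfun U V y = ((2 * (U y * conj (V y)).re : ℝ) : ℂ) := by
  rw [Rfun, ← add_conj, map_mul, conj_conj, mul_comm (conj (U y))]

theorem Ffun_eq_ofReal (k l : ℕ) (U V : ℝ → ℂ) (y : ℝ) :
    Ffun k l U V y =
      (((l : ℝ) * (‖U y‖ ^ 2 + ‖V y‖ ^ 2) ^ k * (Rfun U V y).re ^ (l - 1) : ℝ) : ℂ) := by
  rw [Ffun, Rfun_eq_ofReal, ofReal_re]
  push_cast
  ring

theorem Gfun_eq_ofReal (k l : ℕ) (U V : ℝ → ℂ) (y : ℝ) :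
    Gfun k l U V y =
      (((k : ℝ) * (‖U y‖ ^ 2 + ‖V y‖ ^ 2) ^ (k - 1) * (Rfun U V y).re ^ l : ℝ) : ℂ) := by
  rw [Gfun, Rfun_eq_ofReal, ofReal_re]
  push_cast
  ring

theorem Ffun_re_nonneg (k : ℕ) {l : ℕ} (hl : Odd l) (U V : ℝ → ℂ) (y : ℝ) :
    0 ≤ (Ffun k l U V y).re := by
  rw [Ffun_eq_ofReal, ofReal_re]
  exact mul_nonneg (by positivity) ((Nat.Odd.sub_odd hl odd_one).pow_nonneg _)

theorem Gfun_re_mul_Rfun_re_nonneg (k : ℕ) {l : ℕ} (hl : Odd l) (U V : ℝ → ℂ) (y : ℝ) :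
    0 ≤ (Gfun k l U V y).re * (Rfun U V y).re := by
  rw [Gfun_eq_ofReal, ofReal_re, mul_assoc, ← pow_succ]
  exact mul_nonneg (by positivity) (hl.add_one.pow_nonneg _)

theorem Gfun_eq_zero_of_re_mul_Rfun_re_eq_zero {k l : ℕ} (hl : 1 ≤ l) {U V : ℝ → ℂ} {y : ℝ}
    (h : (Gfun k l U V y).re * (Rfun U V y).re = 0) : Gfun k l U V y = 0 := by
  set r := (Rfun U V y).re
  have hG : (Gfun k l U V y).re = (k * (‖U y‖ ^ 2 + ‖V y‖ ^ 2) ^ (k - 1) * r ^ (l - 1)) * r := by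
    rw [Gfun_eq_ofReal, ofReal_re, ← pow_sub_one_mul (by omega : l ≠ 0)]
    ring
  have hG0 : (Gfun k l U V y).re = 0 := by
    rw [← mul_self_eq_zero]
    nth_rw 2 [hG]
    linear_combination (k * (‖U y‖ ^ 2 + ‖V y‖ ^ 2) ^ (k - 1) * r ^ (l - 1)) * h
  rw [Gfun_eq_ofReal, ofReal_re] at hG0
  rw [Gfun_eq_ofReal, hG0, ofReal_zero]

theorem eq_zero_and_eq_zero_of_weighted_norm_sq_eq_zero {U V : ℝ → ℂ} {y : ℝ}
    (hy : y ∈ Ioo (-1 : ℝ) 1) (h : (y + 1) * ‖U y‖ ^ 2 + (1 - y) * ‖V y‖ ^ 2 = 0) :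
    U y = 0 ∧ V y = 0 := by
  have h₁ : 0 < y + 1 := by linarith [hy.1]
  have h₂ : 0 < 1 - y := by linarith [hy.2]
  rw [add_eq_zero_iff_of_nonneg (by positivity) (by positivity)] at h
  simpa [h₁.ne', h₂.ne'] using h

theorem Ffun_eq_zero_of_re_mul_eq_zero {k l : ℕ} (hp : 1 ≤ k + l - 1) {U V : ℝ → ℂ} {y : ℝ}
    (hy : y ∈ Ioo (-1 : ℝ) 1)
    (h : (Ffun k l U V y).re * ((y + 1) * ‖U y‖ ^ 2 + (1 - y) * ‖V y‖ ^ 2) = 0) :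
    Ffun k l U V y = 0 := by
  rcases mul_eq_zero.1 h with hF | hW
  · exact Complex.ext hF (by rw [Ffun_eq_ofReal, ofReal_im, zero_im])
  · obtain ⟨hU, hV⟩ := eq_zero_and_eq_zero_of_weighted_norm_sq_eq_zero hy hW
    have hR : Rfun U V y = 0 := by simp [Rfun, hU, hV]
    have hs : ((‖U y‖ ^ 2 + ‖V y‖ ^ 2 : ℝ) : ℂ) = 0 := by simp [hU, hV]
    rw [Ffun, hR, hs, mul_assoc, ← pow_add, zero_pow (by omega), mul_zero]

namespace SolvesS

variable {k l : ℕ} {U V : ℝ → ℂ} {J : Set ℝ}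

theorem hasDerivAt_fst (hS : SolvesS k l U V J) (hJ : IsOpen J) {y : ℝ} (hy : y ∈ J) :
    HasDerivAt U (deriv U y) y :=
  ((hS.1.differentiableOn one_ne_zero).differentiableAt (hJ.mem_nhds hy)).hasDerivAt

theorem hasDerivAt_snd (hS : SolvesS k l U V J) (hJ : IsOpen J) {y : ℝ} (hy : y ∈ J) :
    HasDerivAt V (deriv V y) y :=
  ((hS.2.1.differentiableOn one_ne_zero).differentiableAt (hJ.mem_nhds hy)).hasDerivAt

theorem hasDerivAt_im_mul_conj (hS : SolvesS k l U V J) (hJ : IsOpen J) {y : ℝ} (hy : y ∈ J) :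
    HasDerivAt (fun x ↦ (U x * conj (V x)).im)
      ((deriv U y * conj (V y) + U y * conj (deriv V y)).im) y :=
  imCLM.hasFDerivAt.comp_hasDerivAt y
    ((hS.hasDerivAt_fst hJ hy).mul (hS.hasDerivAt_snd hJ hy).star)

theorem one_sub_sq_mul_deriv_im (hS : SolvesS k l U V J) {y : ℝ} (hy : y ∈ J) :
    (1 - y ^ 2) * (deriv U y * conj (V y) + U y * conj (deriv V y)).im =
      2 * (1 / (2 * (k + l - 1 : ℕ))) * y * (U y * conj (V y)).im
        - ((Gfun k l U V y).re * (Rfun U V y).re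
          + (Ffun k l U V y).re * ((y + 1) * ‖U y‖ ^ 2 + (1 - y) * ‖V y‖ ^ 2)) := by
  have hc : (1 / (2 * ((k + l - 1 : ℕ) : ℂ))) = ((1 / (2 * (k + l - 1 : ℕ)) : ℝ) : ℂ) := by
    push_cast; rfl
  obtain ⟨hu, hv⟩ := hS.2.2 y hy
  rw [hc, Ffun_eq_ofReal, Gfun_eq_ofReal] at hu hv
  rw [one_sub_sq_mul_im_deriv_mul_conj hu hv, Ffun_eq_ofReal, Gfun_eq_ofReal, Rfun_eq_ofReal,
    ofReal_re, ofReal_re, ofReal_re]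

theorem Ffun_eq_zero_and_Gfun_eq_zero (hS : SolvesS k l U V (Ioo (-1) 1)) (hl : Odd l)
    (hp : 1 ≤ k + l - 1) {MU MV : ℝ} (hMU : ∀ y ∈ Ioo (-1 : ℝ) 1, ‖U y‖ ≤ MU)
    (hMV : ∀ y ∈ Ioo (-1 : ℝ) 1, ‖V y‖ ≤ MV) :
    ∀ y ∈ Ioo (-1 : ℝ) 1, Ffun k l U V y = 0 ∧ Gfun k l U V y = 0 := by
  have hc : (0 : ℝ) < 1 / (2 * (k + l - 1 : ℕ)) := by
    have : (1 : ℝ) ≤ (k + l - 1 : ℕ) := by exact_mod_cast hp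
    positivity
  have hW : ∀ y ∈ Ioo (-1 : ℝ) 1, 0 ≤ (y + 1) * ‖U y‖ ^ 2 + (1 - y) * ‖V y‖ ^ 2 :=
    fun y hy ↦ add_nonneg (mul_nonneg (by linarith [hy.1]) (sq_nonneg _))
      (mul_nonneg (by linarith [hy.2]) (sq_nonneg _))
  have hψM : ∀ y ∈ Ioo (-1 : ℝ) 1, |(U y * conj (V y)).im| ≤ MU * MV := fun y hy ↦ by
    refine (abs_im_le_norm _).trans ?_
    rw [norm_mul, norm_conj]
    exact mul_le_mul (hMU y hy) (hMV y hy) (norm_nonneg _) ((norm_nonneg _).trans (hMU y hy))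
  have hD := source_eq_zero_of_one_sub_sq_mul_hasDerivAt hc
    (fun y hy ↦ hS.hasDerivAt_im_mul_conj isOpen_Ioo hy) (fun y hy ↦ hS.one_sub_sq_mul_deriv_im hy)
    (fun y hy ↦ add_nonneg (Gfun_re_mul_Rfun_re_nonneg k hl U V y)
      (mul_nonneg (Ffun_re_nonneg k hl U V y) (hW y hy))) hψM
  intro y hy
  have hGR := Gfun_re_mul_Rfun_re_nonneg k hl U V y
  have hFW := mul_nonneg (Ffun_re_nonneg k hl U V y) (hW y hy)
  exact ⟨Ffun_eq_zero_of_re_mul_eq_zero hp hy (by linarith [hD y hy]),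
    Gfun_eq_zero_of_re_mul_Rfun_re_eq_zero hl.pos (by linarith [hD y hy])⟩

theorem eq_zero_of_Ffun_Gfun_eq_zero (hS : SolvesS k l U V (Ioo (-1) 1)) (hp : 1 ≤ k + l - 1)
    (hFG : ∀ y ∈ Ioo (-1 : ℝ) 1, Ffun k l U V y = 0 ∧ Gfun k l U V y = 0) {MU MV : ℝ}
    (hMU : ∀ y ∈ Ioo (-1 : ℝ) 1, ‖U y‖ ≤ MU) (hMV : ∀ y ∈ Ioo (-1 : ℝ) 1, ‖V y‖ ≤ MV) :
    ∀ y ∈ Ioo (-1 : ℝ) 1, U y = 0 ∧ V y = 0 := by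
  set c : ℝ := 1 / (2 * (k + l - 1 : ℕ))
  have hc : 0 < c := by
    have : (1 : ℝ) ≤ (k + l - 1 : ℕ) := by exact_mod_cast hp
    positivity
  have hlin : ∀ y ∈ Ioo (-1 : ℝ) 1,
      ((y : ℂ) + 1) * deriv U y = -c * U y ∧ ((y : ℂ) - 1) * deriv V y = -c * V y := by
    intro y hy
    obtain ⟨hu, hv⟩ := hS.2.2 y hy
    have hcast : (1 / (2 * ((k + l - 1 : ℕ) : ℂ))) = (c : ℂ) := by
      simp only [c]
      push_cast
      rfl
    simp only [(hFG y hy).1, (hFG y hy).2, hcast, zero_mul, add_zero, mul_eq_zero, I_ne_zero,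
      false_or] at hu hv
    exact ⟨by linear_combination hu, by linear_combination hv⟩
  have hneg : ∀ y ∈ Ioo (-1 : ℝ) 1, -y ∈ Ioo (-1 : ℝ) 1 :=
    fun y hy ↦ ⟨by linarith [hy.2], by linarith [hy.1]⟩
  have hU := eq_zero_of_sub_smul_hasDerivAt hc (fun y hy ↦ hS.hasDerivAt_fst isOpen_Ioo hy)
    (fun y hy ↦ by rw [sub_neg_eq_add, real_smul, real_smul]; push_cast; exact (hlin y hy).1) hMU
  -- The reflection `y ↦ -y` moves the singular point of the equation for `V` from `1` to `-1`.
  have hV := eq_zero_of_sub_smul_hasDerivAt (U := fun y ↦ V (-y)) hc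
    (fun y hy ↦ (hS.hasDerivAt_snd isOpen_Ioo (hneg y hy)).scomp y (hasDerivAt_neg y))
    (fun y hy ↦ by
      have h := (hlin (-y) (hneg y hy)).2
      rw [sub_neg_eq_add, real_smul, real_smul, real_smul]
      push_cast at h ⊢
      linear_combination h)
    (fun y hy ↦ hMV (-y) (hneg y hy))
  exact fun y hy ↦ ⟨hU y hy, by simpa using hV (-y) (hneg y hy)⟩

end SolvesS

theorem no_bounded_selfsimilar_odd_general (k l : ℕ) (hl : Odd l)
    (hp : 1 ≤ k + l - 1) (U V : ℝ → ℂ)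
    (hS : SolvesS k l U V (Ioo (-1 : ℝ) 1))
    (hbU : ∃ M : ℝ, ∀ y ∈ Ioo (-1 : ℝ) 1, ‖U y‖ ≤ M)
    (hbV : ∃ M : ℝ, ∀ y ∈ Ioo (-1 : ℝ) 1, ‖V y‖ ≤ M) :
    ∀ y ∈ Ioo (-1 : ℝ) 1, U y = 0 ∧ V y = 0 := by
  obtain ⟨MU, hMU⟩ := hbU
  obtain ⟨MV, hMV⟩ := hbV
  exact hS.eq_zero_of_Ffun_Gfun_eq_zero hp (hS.Ffun_eq_zero_and_Gfun_eq_zero hl hp hMU hMV) hMU hMV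

/-- for odd `ℓ`, there are no nontrivial bounded self-similar
solutions on `(-1,1)`. -/
theorem no_bounded_selfsimilar_odd (k l : ℕ) (hl : Odd l) (hlpos : 1 ≤ l)
    (hp : 1 ≤ k + l - 1) (U V : ℝ → ℂ)
    (hS : SolvesS k l U V (Ioo (-1 : ℝ) 1))
    (hbU : ∃ M : ℝ, ∀ y ∈ Ioo (-1 : ℝ) 1, ‖U y‖ ≤ M)
    (hbV : ∃ M : ℝ, ∀ y ∈ Ioo (-1 : ℝ) 1, ‖V y‖ ≤ M) :
    ∀ y ∈ Ioo (-1 : ℝ) 1, U y = 0 ∧ V y = 0 :=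
  no_bounded_selfsimilar_odd_general k l hl hp U V hS hbU hbV
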